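/- arXiv:2303.07211 — 2 statements merged into one kernel-verified Lean document; each statement's English description precedes it below -/
import Mathlib

section
/- For any q ≥ 2 and n > k ≥ 1, there exists a q-ary (k,n)-frameproof code of length ⌈n/(q-1)⌉. In particular, the concatenation of q-1 diagonal matrices of size ⌈n/(q-1)⌉×⌈n/(q-1)⌉, where the i-th matrix has the symbol i on its diagonal and 0 elsewhere, restricted to any n columns, is such a code. -/
/-- `M` is a `q`-ary `(k,n)`-frameproof code of length `t`. -/
def IsFrameproof (q k n t : ℕ) (M : Fin t → Fin n → ℕ) : Prop :=
  (∀ i j, M i j < q) ∧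
  ∀ c : Fin n, ∀ S : Finset (Fin n), S.card = k → c ∉ S →
    ∃ i : Fin t, ∀ j ∈ S, M i j ≠ M i c

/-! Column `j` of the concatenation of the diagonal `t × t` matrices `1 • I, …, (q - 1) • I`
is column `j % t` of block `j / t + 1`: it carries the symbol `j / t + 1` in row `j % t` and `0`
elsewhere. Two distinct columns with the same residue carry different nonzero symbols in that
row, and columns with another residue carry `0` there, so every column `c` is separated from all
other columns at once by row `c % t`. The symbols stay below `q` as soon as `n ≤ t (q - 1)`. -/

def diagCode (t n : ℕ) (i : Fin t) (j : Fin n) : ℕ :=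
  if (j : ℕ) % t = i then (j : ℕ) / t + 1 else 0

section diagCode

variable {q n t : ℕ}

theorem diagCode_lt (h : n ≤ t * (q - 1)) (i : Fin t) (j : Fin n) : diagCode t n i j < q := by
  have hdiv : (j : ℕ) / t + 1 < q :=
    Nat.add_lt_of_lt_sub (Nat.div_lt_of_lt_mul (j.isLt.trans_le h))
  unfold diagCode
  split_ifs
  · exact hdiv
  · exact Nat.zero_lt_of_lt hdiv

theorem diagCode_ne_of_ne {j c : Fin n} (hjc : j ≠ c) (ht : 0 < t) :
    diagCode t n ⟨c % t, Nat.mod_lt _ ht⟩ j ≠ diagCode t n ⟨c % t, Nat.mod_lt _ ht⟩ c := by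
  simp only [diagCode]
  split_ifs with hmod
  · exact fun hdiv => hjc (Fin.ext (Nat.ext_div_modEq (Nat.add_right_cancel hdiv) hmod))
  · exact (Nat.succ_ne_zero _).symm

theorem isFrameproof_diagCode (k : ℕ) (h : n ≤ t * (q - 1)) :
    IsFrameproof q k n t (diagCode t n) :=
  ⟨diagCode_lt h, fun c _ _ hcS => ⟨_, fun _ hj =>
    diagCode_ne_of_ne (ne_of_mem_of_not_mem hj hcS) (Nat.pos_of_mul_pos_right (c.pos.trans_le h))⟩⟩

end diagCode

theorem le_ceil_div_sub_one_mul {q : ℕ} (hq : 2 ≤ q) (n : ℕ) :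
    n ≤ ⌈(n : ℝ) / ((q : ℝ) - 1)⌉₊ * (q - 1) := by
  have hq1 : (0 : ℝ) < (q : ℝ) - 1 := sub_pos.2 (Nat.one_lt_cast.2 hq)
  set t := ⌈(n : ℝ) / ((q : ℝ) - 1)⌉₊
  have hceil : (n : ℝ) ≤ t * ((q - 1 : ℕ) : ℝ) := by
    rw [Nat.cast_pred (by omega)]
    exact (div_le_iff₀ hq1).1 (Nat.le_ceil _)
  exact_mod_cast hceil

theorem diag_frameproof_general (q k n : ℕ) (hq : 2 ≤ q) :
    ∃ M : Fin (⌈(n : ℝ) / ((q : ℝ) - 1)⌉₊) → Fin n → ℕ,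
      IsFrameproof q k n (⌈(n : ℝ) / ((q : ℝ) - 1)⌉₊) M :=
  ⟨_, isFrameproof_diagCode k (le_ceil_div_sub_one_mul hq n)⟩

theorem diag_frameproof (q k n : ℕ) (hq : 2 ≤ q) (hk : 1 ≤ k) (hn : k < n) :
    ∃ M : Fin (⌈(n : ℝ) / ((q : ℝ) - 1)⌉₊) → Fin n → ℕ,
      IsFrameproof q k n (⌈(n : ℝ) / ((q : ℝ) - 1)⌉₊) M :=
  diag_frameproof_general q k n hq
end

section
/- Mapping each symbol i ∈ {0,...,q-1} of a q-ary (k,n)-frameproof code of length t to the binary column vector e_{i+1} of length q (with a 1 in position i+1 and 0 elsewhere) yields a binary (k,n)-strongly selective code of length q·t. -/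
/-- `N` is a binary `(k,n)`-strongly selective code with rows indexed by `ι`. -/
def IsBinaryStronglySelective (k n : ℕ) {ι : Type*} (N : ι → Fin n → ℕ) : Prop :=
  (∀ i j, N i j < 2) ∧
  ∀ S : Finset (Fin n), S.card = k → ∀ c ∈ S,
    ∃ i : ι, N i c = 1 ∧ ∀ j ∈ S, j ≠ c → N i j = 0

theorem IsFrameproof.exists_row_ne_of_card_le {q k n t : ℕ} {M : Fin t → Fin n → ℕ}
    (hM : IsFrameproof q k n t M) (hkn : k < n) {c : Fin n} {T : Finset (Fin n)}
    (hT : T.card ≤ k) (hcT : c ∉ T) : ∃ i, ∀ j ∈ T, M i j ≠ M i c := by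
  have hk_room : k ≤ (Finset.univ.erase c).card := by
    rw [Finset.card_erase_of_mem (Finset.mem_univ c), Finset.card_univ, Fintype.card_fin]
    omega
  obtain ⟨U, hTU, hUc, hU⟩ :=
    Finset.exists_subsuperset_card_eq (fun j hj ↦ Finset.mem_erase.2 ⟨ne_of_mem_of_not_mem hj hcT,
      Finset.mem_univ j⟩) hT hk_room
  obtain ⟨i, hi⟩ := hM.2 c U hU fun hcU ↦ Finset.notMem_erase c _ (hUc hcU)
  exact ⟨i, fun j hj ↦ hi j (hTU hj)⟩

theorem isBinaryStronglySelective_oneHot {ι : Type*} {q k n : ℕ} {M : ι → Fin n → ℕ}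
    (hlt : ∀ i j, M i j < q)
    (hsep : ∀ S : Finset (Fin n), S.card = k → ∀ c ∈ S, ∃ i, ∀ j ∈ S, j ≠ c → M i j ≠ M i c) :
    IsBinaryStronglySelective k n
      (fun p : ι × Fin q => fun j : Fin n => if M p.1 j = (p.2 : ℕ) then 1 else 0) := by
  refine ⟨fun p j ↦ by dsimp only; split <;> omega, fun S hS c hc ↦ ?_⟩
  obtain ⟨i, hi⟩ := hsep S hS c hc
  exact ⟨(i, ⟨M i c, hlt i c⟩), if_pos rfl, fun j hj hjc ↦ if_neg (hi j hj hjc)⟩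

theorem fp_to_binary_ss_general (q k n t : ℕ) (hn : k < n)
    (M : Fin t → Fin n → ℕ) (hM : IsFrameproof q k n t M) :
    IsBinaryStronglySelective k n
      (fun p : Fin t × Fin q => fun j : Fin n => if M p.1 j = (p.2 : ℕ) then 1 else 0) := by
  refine isBinaryStronglySelective_oneHot hM.1 fun S hS c _ ↦ ?_
  obtain ⟨i, hi⟩ := hM.exists_row_ne_of_card_le hn
    (T := S.erase c) (by rw [← hS]; exact Finset.card_erase_le) (Finset.notMem_erase c S)
  exact ⟨i, fun j hj hjc ↦ hi j (Finset.mem_erase.2 ⟨hjc, hj⟩)⟩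

theorem fp_to_binary_ss (q k n t : ℕ) (hq : 2 ≤ q) (hk : 1 ≤ k) (hn : k < n)
    (M : Fin t → Fin n → ℕ) (hM : IsFrameproof q k n t M) :
    IsBinaryStronglySelective k n
      (fun p : Fin t × Fin q => fun j : Fin n => if M p.1 j = (p.2 : ℕ) then 1 else 0) :=
  fp_to_binary_ss_general q k n t hn M hM
end
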